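/- arXiv:2512.15409 — 4 statements merged into one kernel-verified Lean document; each statement's English description precedes it below -/
import Mathlib

section
/- Let ω be a subadditive weight function, φ_ω(t)=ω(e^t) and φ*_ω its Young conjugate. Then for all integers j ≥ 0 and m ≥ 1 one has 3m·φ*_ω(j/(3m)) + j ≤ m·φ*_ω(j/m). -/
open MeasureTheory

/-- A subadditive weight function in the sense of Braun–Meise–Taylor:
continuous, increasing on `[0,∞)`, nonnegative, subadditive, with
`∫₀^∞ ω(t)/(1+t²) dt < ∞`, `log(1+t²) = o(ω(t))` and `t ↦ ω(eᵗ)` convex. -/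
structure IsWeightFunction (ω : ℝ → ℝ) : Prop where
  continuous : Continuous ω
  monotone : MonotoneOn ω (Set.Ici 0)
  nonneg : ∀ t : ℝ, 0 ≤ t → 0 ≤ ω t
  subadditive : ∀ s t : ℝ, 0 ≤ s → 0 ≤ t → ω (s + t) ≤ ω s + ω t
  integral : IntegrableOn (fun t : ℝ => ω t / (1 + t ^ 2)) (Set.Ioi 0)
  growth : (fun t : ℝ => Real.log (1 + t ^ 2)) =o[Filter.atTop] ω
  convex : ConvexOn ℝ Set.univ fun t : ℝ => ω (Real.exp t)

/-- The Young conjugate `φ*_ω(s) = sup_{t ≥ 0} (s·t − ω(eᵗ))`. -/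
noncomputable def youngConj (ω : ℝ → ℝ) (s : ℝ) : ℝ :=
  sSup ((fun t : ℝ => s * t - ω (Real.exp t)) '' Set.Ici 0)

lemma youngConj_bddAbove (ω : ℝ → ℝ) (hω : IsWeightFunction ω) (s : ℝ) (hs : 0 ≤ s) :
    BddAbove ((fun t : ℝ => s * t - ω (Real.exp t)) '' Set.Ici 0) := by
  have h := hω.growth.def (c := 1 / (2 * (s + 1))) (by positivity)
  rw [Filter.eventually_atTop] at h
  obtain ⟨T, hT⟩ := h
  set U := max 0 (max T 1) with hU
  have hU0 : 0 ≤ U := le_max_left _ _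
  refine ⟨max (s * U) 0, ?_⟩
  rintro x ⟨t, ht, rfl⟩
  simp only [Set.mem_Ici] at ht
  by_cases htU : t ≤ U
  · have h0 := hω.nonneg _ (Real.exp_pos t).le
    have : s * t ≤ s * U := by nlinarith
    have : s * t - ω (Real.exp t) ≤ s * U := by linarith
    exact this.trans (le_max_left _ _)
  · push_neg at htU
    have ht1 : T ≤ Real.exp t := by
      have h1 : T ≤ U := le_max_of_le_right (le_max_left _ _)
      have h2 : t + 1 ≤ Real.exp t := Real.add_one_le_exp t
      linarith
    have h3 := hT (Real.exp t) ht1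
    have hlog : 2 * t ≤ Real.log (1 + Real.exp t ^ 2) := by
      have : Real.exp t ^ 2 = Real.exp (2 * t) := by
        rw [sq, ← Real.exp_add, two_mul]
      rw [this]
      calc 2 * t = Real.log (Real.exp (2 * t)) := (Real.log_exp _).symm
        _ ≤ Real.log (1 + Real.exp (2 * t)) :=
            Real.log_le_log (Real.exp_pos _) (by linarith)
    have hωnn := hω.nonneg _ (Real.exp_pos t).le
    have hnorm1 : ‖Real.log (1 + Real.exp t ^ 2)‖ = Real.log (1 + Real.exp t ^ 2) := by
      rw [Real.norm_eq_abs, abs_of_nonneg]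
      apply Real.log_nonneg; nlinarith [sq_nonneg (Real.exp t)]
    have hnorm2 : ‖ω (Real.exp t)‖ = ω (Real.exp t) := by
      rw [Real.norm_eq_abs, abs_of_nonneg hωnn]
    rw [hnorm1, hnorm2] at h3
    have ht0 : 0 < t := lt_of_le_of_lt hU0 htU
    have hω4 : 4 * (s + 1) * t ≤ ω (Real.exp t) := by
      have hc : 0 < 2 * (s + 1) := by positivity
      rw [div_mul_eq_mul_div, le_div_iff₀ hc] at h3
      nlinarith
    have : s * t - ω (Real.exp t) ≤ 0 := by nlinarith
    exact this.trans (le_max_right _ _)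

/-- `3m·φ*_ω(j/(3m)) + j ≤ m·φ*_ω(j/m)` for all integers `j ≥ 0`, `m ≥ 1`. -/
theorem stmt0 (ω : ℝ → ℝ) (hω : IsWeightFunction ω) (j m : ℕ) (hm : 1 ≤ m) :
    3 * (m : ℝ) * youngConj ω ((j : ℝ) / (3 * m)) + (j : ℝ) ≤
      (m : ℝ) * youngConj ω ((j : ℝ) / m) := by
  have hm0 : (0:ℝ) < m := by exact_mod_cast hm
  have hj0 : (0:ℝ) ≤ j := Nat.cast_nonneg j
  have hs1 : 0 ≤ (j : ℝ) / (3 * m) := by positivity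
  have hs2 : 0 ≤ (j : ℝ) / m := by positivity
  have hbdd2 := youngConj_bddAbove ω hω _ hs2
  have hkey : ∀ t : ℝ, 0 ≤ t → ω (Real.exp (t + 1)) ≤ 3 * ω (Real.exp t) := by
    intro t ht
    have hx := (Real.exp_pos t).le
    have h1 : Real.exp (t + 1) ≤ 3 * Real.exp t := by
      rw [Real.exp_add]
      have h2 : Real.exp 1 ≤ 3 := by
        have := Real.exp_one_lt_d9; linarith
      nlinarith [Real.exp_pos t]
    have h3 : ω (Real.exp (t + 1)) ≤ ω (3 * Real.exp t) :=
      hω.monotone (Set.mem_Ici.2 (Real.exp_pos _).le) (Set.mem_Ici.2 (by positivity)) h1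
    have h4 : ω (3 * Real.exp t) ≤ 3 * ω (Real.exp t) := by
      have e1 := hω.subadditive (Real.exp t + Real.exp t) (Real.exp t) (by linarith) hx
      have e2 := hω.subadditive (Real.exp t) (Real.exp t) hx hx
      have e3 : 3 * Real.exp t = Real.exp t + Real.exp t + Real.exp t := by ring
      rw [e3]; linarith
    linarith
  have hsup : youngConj ω ((j : ℝ) / (3 * m)) ≤
      ((m : ℝ) * youngConj ω ((j : ℝ) / m) - j) / (3 * m) := by
    refine csSup_le ⟨_, Set.mem_image_of_mem _ Set.self_mem_Ici⟩ ?_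
    rintro x ⟨t, ht, rfl⟩
    simp only [Set.mem_Ici] at ht
    rw [le_div_iff₀ (by positivity : (0:ℝ) < 3 * m)]
    have hmem : ((j : ℝ) / m) * (t + 1) - ω (Real.exp (t + 1)) ∈
        ((fun t : ℝ => ((j : ℝ) / m) * t - ω (Real.exp t)) '' Set.Ici 0) :=
      ⟨t + 1, by simp [Set.mem_Ici]; linarith, rfl⟩
    have hle := le_csSup hbdd2 hmem
    have e1 : ((j : ℝ) / (3 * m)) * (3 * m) = j := by field_simp
    have e2 : ((j : ℝ) / m) * m = j := by field_simp
    have hk := hkey t ht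
    have hY : (m : ℝ) * (((j : ℝ) / m) * (t + 1) - ω (Real.exp (t + 1))) ≤
        (m : ℝ) * youngConj ω ((j : ℝ) / m) := by
      exact mul_le_mul_of_nonneg_left hle hm0.le
    nlinarith [hω.nonneg _ (Real.exp_pos t).le]
  rw [le_div_iff₀ (by positivity : (0:ℝ) < 3 * m)] at hsup
  nlinarith [hsup]
end

section
/- Let ω be a subadditive weight function with Young conjugate φ*_ω, let m > 0, and let G:ℂ→ℂ be an entire function satisfying log|G(z)| ≤ m(1+ω(|z|)) for all z ∈ ℂ. Then for every n ∈ ℕ₀ one has |G^(n)(0)/n!| ≤ e^m · exp(−m·φ*_ω(n/m)). -/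
open MeasureTheory

/-! Cauchy's estimate on the circle `|z| = eᵗ` bounds the Taylor coefficient by
`exp(m(1 + ω(eᵗ)) − n t) = eᵐ · exp(−m(t·n/m − ω(eᵗ)))`; taking the infimum over `t ≥ 0` produces
the Young conjugate. When the coefficient is nonzero, these bounds themselves show that the
supremum defining `φ*_ω` is finite, so the junk value of `sSup` never enters. -/

open Real

lemma youngConj_le_of_forall_le {ω : ℝ → ℝ} {s c : ℝ}
    (h : ∀ t, 0 ≤ t → s * t - ω (exp t) ≤ c) : youngConj ω s ≤ c :=
  csSup_le ⟨_, 0, Set.mem_Ici.2 le_rfl, rfl⟩ (by rintro _ ⟨t, ht, rfl⟩; exact h t ht)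

lemma le_exp_mul_exp_neg_mul_youngConj {ω : ℝ → ℝ} {a m s B : ℝ} (hm : 0 < m)
    (h : ∀ t, 0 ≤ t → B ≤ exp (a - m * (s * t - ω (exp t)))) :
    B ≤ exp a * exp (-(m * youngConj ω s)) := by
  rcases le_or_gt B 0 with hB | hB
  · exact hB.trans (by positivity)
  have hyoung : youngConj ω s ≤ (a - log B) / m := by
    refine youngConj_le_of_forall_le fun t ht => ?_
    have hlog := (log_le_iff_le_exp hB).2 (h t ht)
    rw [le_div_iff₀ hm]
    linarith
  calc B = exp (a - m * ((a - log B) / m)) := by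
        rw [mul_div_cancel₀ _ hm.ne', sub_sub_cancel, exp_log hB]
    _ ≤ exp a * exp (-(m * youngConj ω s)) := by
        rw [← exp_add, exp_le_exp]
        linarith [mul_le_mul_of_nonneg_left hyoung hm.le]

lemma norm_iteratedDeriv_div_factorial_le_exp {G : ℂ → ℂ} {φ : ℝ → ℝ}
    (hG : Differentiable ℂ G) (hbound : ∀ z, ‖G z‖ ≤ exp (φ ‖z‖)) (n : ℕ) (t : ℝ) :
    ‖iteratedDeriv n G 0‖ / n.factorial ≤ exp (φ (exp t) - n * t) := by
  have hcauchy := Complex.norm_iteratedDeriv_le_of_forall_mem_sphere_norm_le n (exp_pos t)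
    hG.diffContOnCl fun z hz => (hbound z).trans_eq (by rw [mem_sphere_zero_iff_norm.1 hz])
  rw [div_le_iff₀ (by positivity)]
  calc ‖iteratedDeriv n G 0‖ ≤ n.factorial * exp (φ (exp t)) / exp t ^ n := hcauchy
    _ = exp (φ (exp t) - n * t) * n.factorial := by
        rw [← exp_nat_mul, exp_sub]
        ring

theorem stmt1_general (ω : ℝ → ℝ) (m : ℝ) (hm : 0 < m)
    (G : ℂ → ℂ) (hG : Differentiable ℂ G)
    (hGbound : ∀ z : ℂ, ‖G z‖ ≤ Real.exp (m * (1 + ω ‖z‖))) (n : ℕ) :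
    ‖iteratedDeriv n G 0‖ / (n.factorial : ℝ) ≤
      Real.exp m * Real.exp (-(m * youngConj ω ((n : ℝ) / m))) := by
  refine le_exp_mul_exp_neg_mul_youngConj hm fun t _ => ?_
  refine (norm_iteratedDeriv_div_factorial_le_exp (φ := fun r => m * (1 + ω r))
    hG hGbound n t).trans_eq ?_
  congr 1
  field_simp
  ring

/-- Taylor coefficient bounds for an entire function dominated by
`exp(m(1+ω(|z|)))`. -/
theorem stmt1 (ω : ℝ → ℝ) (hω : IsWeightFunction ω) (m : ℝ) (hm : 0 < m)
    (G : ℂ → ℂ) (hG : Differentiable ℂ G)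
    (hGbound : ∀ z : ℂ, ‖G z‖ ≤ Real.exp (m * (1 + ω ‖z‖))) (n : ℕ) :
    ‖iteratedDeriv n G 0‖ / (n.factorial : ℝ) ≤
      Real.exp m * Real.exp (-(m * youngConj ω ((n : ℝ) / m))) :=
  stmt1_general ω m hm G hG hGbound n
end

section
/- Let A be an invertible d×d real matrix, b ∈ [0,1), and let θ:ℝ^d→ℝ^d be a smooth map such that every partial derivative of θ of order ≥ 1 is bounded on ℝ^d and |θ(x)| = O(|x|^b) as |x|→∞. Set ψ(x) = Ax + θ(x). Then for every Schwartz function f on ℝ^d the composition f∘ψ is again a Schwartz function, and the composition operator C_ψ : 𝓢(ℝ^d) → 𝓢(ℝ^d), f ↦ f∘ψ, is continuous. -/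
open Real

lemma myAdd {E F : Type*} [NormedAddCommGroup E] [NormedSpace ℝ E]
    [NormedAddCommGroup F] [NormedSpace ℝ F] {f g : E → F}
    (hf : Function.HasTemperateGrowth f) (hg : Function.HasTemperateGrowth g) :
    Function.HasTemperateGrowth (fun x => f x + g x) := by
  refine ⟨hf.1.add hg.1, fun n => ?_⟩
  obtain ⟨k1, C1, h1⟩ := hf.2 n
  obtain ⟨k2, C2, h2⟩ := hg.2 n
  refine ⟨max k1 k2, max C1 0 + max C2 0, fun x => ?_⟩
  have hx : (1:ℝ) ≤ 1 + ‖x‖ := le_add_of_nonneg_right (norm_nonneg x)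
  have e : iteratedFDeriv ℝ n (fun x => f x + g x) x
      = iteratedFDeriv ℝ n f x + iteratedFDeriv ℝ n g x :=
    iteratedFDeriv_add_apply (hf.1.contDiffAt.of_le (by exact_mod_cast le_top)) (hg.1.contDiffAt.of_le (by exact_mod_cast le_top))
  calc ‖iteratedFDeriv ℝ n (fun x => f x + g x) x‖
      ≤ ‖iteratedFDeriv ℝ n f x‖ + ‖iteratedFDeriv ℝ n g x‖ := by rw [e]; exact norm_add_le _ _
    _ ≤ C1 * (1 + ‖x‖) ^ k1 + C2 * (1 + ‖x‖) ^ k2 := add_le_add (h1 x) (h2 x)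
    _ ≤ max C1 0 * (1 + ‖x‖) ^ (max k1 k2) + max C2 0 * (1 + ‖x‖) ^ (max k1 k2) := by
        gcongr <;> first | exact le_max_left _ _ | exact le_max_right _ _ | exact hx | positivity
    _ = (max C1 0 + max C2 0) * (1 + ‖x‖) ^ (max k1 k2) := by ring

/-- if `ψ(x) = Ax + θ(x)` with `A` an invertible linear map of `ℝ^d`,
`θ` smooth with all partial derivatives of order `≥ 1` bounded and
`|θ(x)| = O(|x|^b)` for some `b ∈ [0,1)`, then `f ↦ f ∘ ψ` maps the Schwartz space
into itself and is continuous (it is realized by a continuous linear operator). -/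
theorem stmt7 (d : ℕ) (A : EuclideanSpace ℝ (Fin d) ≃L[ℝ] EuclideanSpace ℝ (Fin d))
    (b : ℝ) (hb0 : 0 ≤ b) (hb1 : b < 1)
    (θ : EuclideanSpace ℝ (Fin d) → EuclideanSpace ℝ (Fin d)) (hθ : ContDiff ℝ (⊤ : ℕ∞) θ)
    (hbd : ∀ n : ℕ, 1 ≤ n → ∃ C : ℝ, ∀ x, ‖iteratedFDeriv ℝ n θ x‖ ≤ C)
    (hθb : ∃ C₀ > 0, ∀ x, ‖θ x‖ ≤ C₀ * (1 + ‖x‖) ^ b) :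
    ∃ T : SchwartzMap (EuclideanSpace ℝ (Fin d)) ℂ →L[ℂ]
        SchwartzMap (EuclideanSpace ℝ (Fin d)) ℂ,
      ∀ (f : SchwartzMap (EuclideanSpace ℝ (Fin d)) ℂ) (x : EuclideanSpace ℝ (Fin d)),
        T f x = f (A x + θ x) := by
  obtain ⟨C₀, hC₀, hθ0⟩ := hθb
  -- temperate growth of θ
  have hθtg : Function.HasTemperateGrowth θ := by
    refine ⟨hθ.of_le (by simp), fun n => ?_⟩
    rcases Nat.eq_zero_or_pos n with rfl | hn
    · refine ⟨1, C₀, fun x => ?_⟩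
      have hx : (1:ℝ) ≤ 1 + ‖x‖ := le_add_of_nonneg_right (norm_nonneg x)
      calc ‖iteratedFDeriv ℝ 0 θ x‖ = ‖θ x‖ := by simp [norm_iteratedFDeriv_zero]
        _ ≤ C₀ * (1 + ‖x‖) ^ b := hθ0 x
        _ ≤ C₀ * (1 + ‖x‖) ^ (1:ℝ) :=
            mul_le_mul_of_nonneg_left (rpow_le_rpow_of_exponent_le hx hb1.le) hC₀.le
        _ = C₀ * (1 + ‖x‖) ^ (1:ℕ) := by rw [rpow_one, pow_one]
    · obtain ⟨C, hC⟩ := hbd n hn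
      exact ⟨0, C, fun x => by simpa using hC x⟩
  have hAtg : Function.HasTemperateGrowth (fun x : EuclideanSpace ℝ (Fin d) => A x) :=
    (A.toContinuousLinearMap).hasTemperateGrowth
  have hψtg : Function.HasTemperateGrowth (fun x : EuclideanSpace ℝ (Fin d) => A x + θ x) :=
    myAdd hAtg hθtg
  -- lower bound
  set M : ℝ := ‖(A.symm : EuclideanSpace ℝ (Fin d) →L[ℝ] EuclideanSpace ℝ (Fin d))‖ with hM
  have hM0 : 0 ≤ M := norm_nonneg _
  set K : ℝ := max (M * C₀) 1 with hK
  have hK1 : (1:ℝ) ≤ K := le_max_right _ _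
  have hK0 : (0:ℝ) < K := lt_of_lt_of_le one_pos hK1
  set R : ℝ := (2 * K) ^ ((1:ℝ) / (1 - b)) with hR
  have hb1' : (0:ℝ) < 1 - b := by linarith
  have h2K : (1:ℝ) < 2 * K := by linarith
  have hR1 : (1:ℝ) ≤ R := by
    rw [hR]
    exact one_le_rpow h2K.le (by positivity)
  have hR0 : (0:ℝ) < R := lt_of_lt_of_le one_pos hR1
  have hRkey : R ^ (b - 1) = 1 / (2 * K) := by
    rw [hR, ← rpow_mul (by positivity : (0:ℝ) ≤ 2 * K)]
    have : (1:ℝ) / (1 - b) * (b - 1) = -1 := by field_simp; ring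
    rw [this, rpow_neg_one]
    ring
  have hupper : ∃ (k : ℕ) (C : ℝ), ∀ x : EuclideanSpace ℝ (Fin d),
      ‖x‖ ≤ C * (1 + ‖(fun x => A x + θ x) x‖) ^ k := by
    refine ⟨1, 2 * M + 1 + R, fun x => ?_⟩
    set y := A x + θ x with hy
    have hy0 : (0:ℝ) ≤ ‖y‖ := norm_nonneg _
    have hbase : ∀ x : EuclideanSpace ℝ (Fin d), ‖x‖ ≤ M * ‖A x + θ x‖ + K * (1 + ‖x‖) ^ b := by
      intro x
      have h1 : ‖x‖ ≤ M * ‖A x‖ := by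
        have h := (A.symm : EuclideanSpace ℝ (Fin d) →L[ℝ] EuclideanSpace ℝ (Fin d)).le_opNorm (A x)
        simpa only [ContinuousLinearEquiv.coe_coe, A.symm_apply_apply] using h
      have h2 : ‖A x‖ ≤ ‖A x + θ x‖ + ‖θ x‖ := by
        have := norm_add_le (A x + θ x) (-θ x)
        simpa using this
      have h3 : M * ‖θ x‖ ≤ K * (1 + ‖x‖) ^ b := by
        calc M * ‖θ x‖ ≤ M * (C₀ * (1 + ‖x‖) ^ b) := by
              exact mul_le_mul_of_nonneg_left (hθ0 x) hM0
          _ = (M * C₀) * (1 + ‖x‖) ^ b := by ring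
          _ ≤ K * (1 + ‖x‖) ^ b := by
              apply mul_le_mul_of_nonneg_right (le_max_left _ _) (by positivity)
      calc ‖x‖ ≤ M * ‖A x‖ := h1
        _ ≤ M * (‖A x + θ x‖ + ‖θ x‖) := mul_le_mul_of_nonneg_left h2 hM0
        _ = M * ‖A x + θ x‖ + M * ‖θ x‖ := by ring
        _ ≤ M * ‖A x + θ x‖ + K * (1 + ‖x‖) ^ b := by linarith
    rcases le_or_gt ‖x‖ R with hcase | hcase
    · calc ‖x‖ ≤ R := hcase
        _ ≤ R * (1 + ‖y‖) ^ (1:ℕ) := by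
            rw [pow_one]; nlinarith
        _ ≤ (2 * M + 1 + R) * (1 + ‖y‖) ^ (1:ℕ) := by
            apply mul_le_mul_of_nonneg_right (by linarith) (by positivity)
    · -- large x
      have hx1 : (1:ℝ) ≤ ‖x‖ := le_trans hR1 hcase.le
      have habs : K * (1 + ‖x‖) ^ b ≤ (1 + ‖x‖) / 2 := by
        have e1 : (1 + ‖x‖) ^ b = (1 + ‖x‖) * (1 + ‖x‖) ^ (b - 1) := by
          rw [show b = 1 + (b - 1) by ring, rpow_add (by positivity), rpow_one]
          ring_nf
        have e2 : (1 + ‖x‖) ^ (b - 1) ≤ R ^ (b - 1) :=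
          rpow_le_rpow_of_nonpos hR0 (by linarith) (by linarith)
        calc K * (1 + ‖x‖) ^ b = K * ((1 + ‖x‖) * (1 + ‖x‖) ^ (b - 1)) := by rw [e1]
          _ ≤ K * ((1 + ‖x‖) * R ^ (b - 1)) := by
              apply mul_le_mul_of_nonneg_left _ hK0.le
              exact mul_le_mul_of_nonneg_left e2 (by positivity)
          _ = K * (1 + ‖x‖) * (1 / (2 * K)) := by rw [hRkey]; ring
          _ = (1 + ‖x‖) / 2 := by field_simp
      have h4 := hbase x
      have h5 : ‖x‖ ≤ M * ‖y‖ + (1 + ‖x‖) / 2 := by rw [hy]; linarith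
      have h6 : ‖x‖ ≤ 2 * M * ‖y‖ + 1 := by nlinarith
      calc ‖x‖ ≤ 2 * M * ‖y‖ + 1 := h6
        _ ≤ (2 * M + 1 + R) * (1 + ‖y‖) ^ (1:ℕ) := by rw [pow_one]; nlinarith
  refine ⟨SchwartzMap.compCLM ℂ hψtg hupper, fun f x => rfl⟩
end

section
/- Let ω be a subadditive weight function with Young conjugate φ*_ω. Let m ∈ ℕ, C > 0 and let (b_n)_{n≥0} be complex numbers with |b_n| ≤ C·exp(−m·φ*_ω(n/m)) for all n. Let ℓ ∈ ℕ with ℓ ≥ 3m, and let g:ℝ→ℂ be a smooth function with ‖g‖_{2ℓ} := sup_{x∈ℝ, k∈ℕ₀} |g^{(k)}(x)|·exp(−2ℓ·φ*_ω(k/(2ℓ))) < ∞. Then for all k, r ∈ ℕ₀ and all x ∈ ℝ: Σ_{j=0}^∞ binom(k+j, k) · |b_{k+j}| · |g^{(j+r)}(x)| ≤ 2^k · D · C · ‖g‖_{2ℓ} · exp(−m·φ*_ω(k/m) + ℓ·φ*_ω(r/ℓ)), where D = Σ_{j=0}^∞ (2/e)^j. In particular the series a_k(x) = Σ_{j=0}^∞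 binom(k+j,k) b_{k+j} g^{(j)}(x) converges absolutely together with all its termwise derivatives. -/
open MeasureTheory

lemma choose_le_two_pow' (n k : ℕ) : ((n.choose k : ℝ)) ≤ 2 ^ n := by
  by_cases h : k ≤ n
  · have h1 : n.choose k ≤ 2 ^ n := by
      rw [← Nat.sum_range_choose n]
      exact Finset.single_le_sum (f := fun i => n.choose i) (fun i _ => Nat.zero_le _)
        (Finset.mem_range.2 (Nat.lt_succ_of_le h))
    exact_mod_cast h1
  · rw [Nat.choose_eq_zero_of_lt (Nat.lt_of_not_le h)]
    norm_num

lemma yc_bddAbove {ω : ℝ → ℝ} (hω : IsWeightFunction ω) {s : ℝ} (hs : 0 ≤ s) :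
    BddAbove ((fun t : ℝ => s * t - ω (Real.exp t)) '' Set.Ici 0) := by
  have hc : (0 : ℝ) < 1 / (s + 1) := by positivity
  obtain ⟨a, ha⟩ := Filter.eventually_atTop.mp (hω.growth.def hc)
  set T : ℝ := max 1 (max a 1 |>.log) with hT
  have hT1 : (1:ℝ) ≤ T := le_max_left _ _
  refine ⟨s * T, ?_⟩
  rintro y ⟨t, ht, rfl⟩
  simp only [Set.mem_Ici] at ht
  show s * t - ω (Real.exp t) ≤ s * T
  by_cases htT : t ≤ T
  · have : ω (Real.exp t) ≥ 0 := hω.nonneg _ (Real.exp_pos t).le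
    nlinarith [mul_le_mul_of_nonneg_left htT hs]
  · push_neg at htT
    have ht1 : 1 ≤ t := hT1.trans htT.le
    have hexp : max a 1 ≤ Real.exp t := by
      calc max a 1 = Real.exp ((max a 1).log) := by
            rw [Real.exp_log (lt_of_lt_of_le one_pos (le_max_right a 1))]
        _ ≤ Real.exp t := Real.exp_le_exp.2 ((le_max_right _ _).trans htT.le)
    have hkey := ha (Real.exp t) ((le_max_left a 1).trans hexp)
    have hωpos : 0 ≤ ω (Real.exp t) := hω.nonneg _ (Real.exp_pos t).le
    have hlog : Real.log (1 + Real.exp t ^ 2) ≤ 1 / (s + 1) * ω (Real.exp t) := by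
      calc Real.log (1 + Real.exp t ^ 2) ≤ ‖Real.log (1 + Real.exp t ^ 2)‖ := le_abs_self _
        _ ≤ 1 / (s + 1) * ‖ω (Real.exp t)‖ := hkey
        _ = 1 / (s + 1) * ω (Real.exp t) := by rw [Real.norm_eq_abs, abs_of_nonneg hωpos]
    have hlog2 : 2 * t ≤ Real.log (1 + Real.exp t ^ 2) := by
      have h1 : Real.exp t ^ 2 ≤ 1 + Real.exp t ^ 2 := by linarith
      calc 2 * t = Real.log (Real.exp t ^ 2) := by
            rw [Real.log_pow, Real.log_exp]; push_cast; ring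
        _ ≤ _ := Real.log_le_log (by positivity) h1
    have hω2 : (s + 1) * (2 * t) ≤ ω (Real.exp t) := by
      have := mul_le_mul_of_nonneg_left (hlog2.trans hlog) (le_of_lt (by positivity : (0:ℝ) < s + 1))
      field_simp at this
      linarith [this]
    have hTpos : 0 < T := lt_of_lt_of_le one_pos hT1
    nlinarith [mul_nonneg hs hTpos.le, mul_nonneg hs ht]

lemma yc_le {ω : ℝ → ℝ} (hω : IsWeightFunction ω) {s t : ℝ} (hs : 0 ≤ s) (ht : 0 ≤ t) :
    s * t - ω (Real.exp t) ≤ youngConj ω s :=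
  le_csSup (yc_bddAbove hω hs) ⟨t, ht, rfl⟩

lemma yc_sup_le {ω : ℝ → ℝ} (_hω : IsWeightFunction ω) {s c : ℝ}
    (h : ∀ t : ℝ, 0 ≤ t → s * t - ω (Real.exp t) ≤ c) : youngConj ω s ≤ c := by
  refine csSup_le ⟨s * 0 - ω (Real.exp 0), 0, Set.mem_Ici.2 le_rfl, rfl⟩ ?_
  rintro y ⟨t, ht, rfl⟩
  exact h t ht

lemma yc_smul {ω : ℝ → ℝ} (hω : IsWeightFunction ω) {θ s : ℝ} (h0 : 0 ≤ θ) (h1 : θ ≤ 1)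
    (hs : 0 ≤ s) : youngConj ω (θ * s) ≤ θ * youngConj ω s := by
  refine yc_sup_le hω fun t ht => ?_
  have hωt : 0 ≤ ω (Real.exp t) := hω.nonneg _ (Real.exp_pos t).le
  have h2 : s * t - ω (Real.exp t) ≤ youngConj ω s := yc_le hω hs ht
  nlinarith [mul_le_mul_of_nonneg_left h2 h0]

lemma yc_zero_le {ω : ℝ → ℝ} (hω : IsWeightFunction ω) : youngConj ω 0 ≤ 0 := by
  refine yc_sup_le hω fun t ht => ?_
  have := hω.nonneg _ (Real.exp_pos t).le
  linarith

lemma yc_superadd {ω : ℝ → ℝ} (hω : IsWeightFunction ω) {a b : ℝ} (ha : 0 ≤ a) (hb : 0 ≤ b) :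
    youngConj ω a + youngConj ω b ≤ youngConj ω (a + b) := by
  rcases eq_or_lt_of_le (by linarith : (0:ℝ) ≤ a + b) with h | h
  · have ha0 : a = 0 := by linarith
    have hb0 : b = 0 := by linarith
    rw [ha0, hb0]
    have := yc_zero_le hω
    simpa using by linarith [yc_zero_le hω]
  · have h1 : youngConj ω a ≤ a / (a + b) * youngConj ω (a + b) := by
      have := yc_smul hω (θ := a / (a + b)) (s := a + b) (by positivity)
        (by rw [div_le_one h]; linarith) h.le
      rwa [div_mul_cancel₀ _ h.ne'] at this
    have h2 : youngConj ω b ≤ b / (a + b) * youngConj ω (a + b) := by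
      have := yc_smul hω (θ := b / (a + b)) (s := a + b) (by positivity)
        (by rw [div_le_one h]; linarith) h.le
      rwa [div_mul_cancel₀ _ h.ne'] at this
    have h3 : a / (a + b) * youngConj ω (a + b) + b / (a + b) * youngConj ω (a + b) =
        youngConj ω (a + b) := by
      rw [← add_mul, ← add_div, div_self h.ne', one_mul]
    linarith

lemma yc_midpoint {ω : ℝ → ℝ} (hω : IsWeightFunction ω) {a b : ℝ} (ha : 0 ≤ a) (hb : 0 ≤ b) :
    youngConj ω ((a + b) / 2) ≤ (youngConj ω a + youngConj ω b) / 2 := by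
  refine yc_sup_le hω fun t ht => ?_
  have h1 : a * t - ω (Real.exp t) ≤ youngConj ω a := yc_le hω ha ht
  have h2 : b * t - ω (Real.exp t) ≤ youngConj ω b := yc_le hω hb ht
  linarith

lemma yc_scale_mono {ω : ℝ → ℝ} (hω : IsWeightFunction ω) {s μ lam : ℝ} (hs : 0 ≤ s)
    (hμ : 0 < μ) (h : μ ≤ lam) : lam * youngConj ω (s / lam) ≤ μ * youngConj ω (s / μ) := by
  have hlam : 0 < lam := hμ.trans_le h
  have key : youngConj ω (s / lam) ≤ (μ / lam) * youngConj ω (s / μ) := by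
    have h1 : s / lam = (μ / lam) * (s / μ) := by field_simp
    rw [h1]
    exact yc_smul hω (by positivity) (by rw [div_le_one hlam]; exact h) (by positivity)
  calc lam * youngConj ω (s / lam) ≤ lam * ((μ / lam) * youngConj ω (s / μ)) :=
        mul_le_mul_of_nonneg_left key hlam.le
    _ = μ * youngConj ω (s / μ) := by field_simp

lemma omega_three {ω : ℝ → ℝ} (hω : IsWeightFunction ω) {x : ℝ} (hx : 0 ≤ x) :
    ω (3 * x) ≤ 3 * ω x := by
  have h1 := hω.subadditive x x hx hx
  have h2 := hω.subadditive (x + x) x (by linarith) hx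
  have h3 : x + x + x = 3 * x := by ring
  rw [h3] at h2
  linarith

lemma yc_shift {ω : ℝ → ℝ} (hω : IsWeightFunction ω) {s μ : ℝ} (hs : 0 ≤ s) (hμ : 0 < μ) :
    s + 3 * μ * youngConj ω (s / (3 * μ)) ≤ μ * youngConj ω (s / μ) := by
  have key : youngConj ω (s / (3 * μ)) ≤ (μ * youngConj ω (s / μ) - s) / (3 * μ) := by
    refine yc_sup_le hω fun t ht => ?_
    have h1 : s / μ * (t + 1) - ω (Real.exp (t + 1)) ≤ youngConj ω (s / μ) :=
      yc_le hω (by positivity) (by linarith)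
    have h2 : ω (Real.exp (t + 1)) ≤ 3 * ω (Real.exp t) := by
      have he : Real.exp (t + 1) ≤ 3 * Real.exp t := by
        rw [Real.exp_add]
        have : Real.exp 1 ≤ 3 := le_of_lt (Real.exp_one_lt_d9.trans (by norm_num))
        nlinarith [Real.exp_pos t]
      calc ω (Real.exp (t + 1)) ≤ ω (3 * Real.exp t) :=
            hω.monotone (Set.mem_Ici.2 (Real.exp_pos _).le)
              (Set.mem_Ici.2 (by positivity)) he
        _ ≤ 3 * ω (Real.exp t) := omega_three hω (Real.exp_pos t).le
    have h1' : s * (t + 1) - μ * ω (Real.exp (t + 1)) ≤ μ * youngConj ω (s / μ) := by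
      have h := mul_le_mul_of_nonneg_left h1 hμ.le
      have he : μ * (s / μ * (t + 1) - ω (Real.exp (t + 1))) =
          s * (t + 1) - μ * ω (Real.exp (t + 1)) := by field_simp
      rw [he] at h; exact h
    rw [le_div_iff₀ (by positivity : (0:ℝ) < 3 * μ)]
    have he2 : (s / (3 * μ) * t - ω (Real.exp t)) * (3 * μ) =
        s * t - 3 * μ * ω (Real.exp t) := by field_simp
    rw [he2]
    nlinarith [mul_le_mul_of_nonneg_left h2 hμ.le]
  have := mul_le_mul_of_nonneg_left key (by positivity : (0:ℝ) ≤ 3 * μ)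
  rw [mul_div_cancel₀ _ (by positivity : (3:ℝ) * μ ≠ 0)] at this
  linarith

/-- the key series estimate in the proof of Proposition on
`G(-D)(gh)`: for `|b_n| ≤ C·e^{-mφ*(n/m)}`, `ℓ ≥ 3m` and `g` with
`sup_{x,k} |g^{(k)}(x)| e^{-2ℓφ*(k/(2ℓ))} ≤ ‖g‖_{2ℓ}`, the series
`Σ_j binom(k+j,k)|b_{k+j}||g^{(j+r)}(x)|` converges and is bounded by
`2^k·D·C·‖g‖_{2ℓ}·exp(-mφ*(k/m)+ℓφ*(r/ℓ))` with `D = Σ (2/e)^j`. -/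
theorem stmt8 (ω : ℝ → ℝ) (hω : IsWeightFunction ω) (m : ℕ) (hm : 1 ≤ m)
    (C : ℝ) (hC : 0 < C) (b : ℕ → ℂ)
    (hb : ∀ n : ℕ, ‖b n‖ ≤ C * Real.exp (-((m : ℝ) * youngConj ω ((n : ℝ) / m))))
    (ℓ : ℕ) (hℓ : 3 * m ≤ ℓ)
    (g : ℝ → ℂ) (hg : ContDiff ℝ (⊤ : ℕ∞) g) (Mg : ℝ)
    (hMg : ∀ (k : ℕ) (x : ℝ),
      ‖iteratedDeriv k g x‖ *
        Real.exp (-(2 * (ℓ : ℝ) * youngConj ω ((k : ℝ) / (2 * ℓ)))) ≤ Mg)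
    (k r : ℕ) (x : ℝ) :
    Summable (fun j : ℕ =>
      ((k + j).choose k : ℝ) * ‖b (k + j)‖ * ‖iteratedDeriv (j + r) g x‖) ∧
    ∑' j : ℕ, ((k + j).choose k : ℝ) * ‖b (k + j)‖ * ‖iteratedDeriv (j + r) g x‖ ≤
      2 ^ k * (∑' j : ℕ, (2 / Real.exp 1) ^ j) * C * Mg *
        Real.exp (-((m : ℝ) * youngConj ω ((k : ℝ) / m)) +
          (ℓ : ℝ) * youngConj ω ((r : ℝ) / ℓ)) := by
  have hmR : (0:ℝ) < m := by exact_mod_cast hm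
  have hlR : (3:ℝ) * m ≤ ℓ := by exact_mod_cast hℓ
  have hlpos : (0:ℝ) < ℓ := by linarith
  set E : ℝ := -((m : ℝ) * youngConj ω ((k : ℝ) / m)) + (ℓ : ℝ) * youngConj ω ((r : ℝ) / ℓ)
    with hE
  set q : ℝ := 2 / Real.exp 1 with hq
  have hMg0 : 0 ≤ Mg := le_trans (by positivity) (hMg 0 x)
  set A : ℝ := 2 ^ k * C * Mg * Real.exp E with hA
  -- key exponent inequality
  have key : ∀ j : ℕ,
      -((m : ℝ) * youngConj ω (((k : ℝ) + j) / m)) +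
        2 * (ℓ : ℝ) * youngConj ω (((j : ℝ) + r) / (2 * ℓ)) ≤ E - j := by
    intro j
    have hk0 : (0:ℝ) ≤ (k : ℝ) / m := by positivity
    have hj0 : (0:ℝ) ≤ (j : ℝ) / m := by positivity
    have e1 : (m : ℝ) * youngConj ω ((k : ℝ) / m) + (m : ℝ) * youngConj ω ((j : ℝ) / m) ≤
        (m : ℝ) * youngConj ω (((k : ℝ) + j) / m) := by
      have h := yc_superadd hω hk0 hj0
      rw [← add_div] at h
      nlinarith [h]
    have e2 : (j : ℝ) + 3 * (m : ℝ) * youngConj ω ((j : ℝ) / (3 * m)) ≤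
        (m : ℝ) * youngConj ω ((j : ℝ) / m) := yc_shift hω (by positivity) hmR
    have e3 : (ℓ : ℝ) * youngConj ω ((j : ℝ) / ℓ) ≤
        3 * (m : ℝ) * youngConj ω ((j : ℝ) / (3 * m)) :=
      yc_scale_mono hω (by positivity) (by positivity) hlR
    have e4 : 2 * (ℓ : ℝ) * youngConj ω (((j : ℝ) + r) / (2 * ℓ)) ≤
        (ℓ : ℝ) * youngConj ω ((j : ℝ) / ℓ) + (ℓ : ℝ) * youngConj ω ((r : ℝ) / ℓ) := by
      have h := yc_midpoint hω (a := (j : ℝ) / ℓ) (b := (r : ℝ) / ℓ)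
        (by positivity) (by positivity)
      have he : ((j : ℝ) / ℓ + (r : ℝ) / ℓ) / 2 = ((j : ℝ) + r) / (2 * ℓ) := by
        rw [← add_div, div_div, mul_comm]
      rw [he] at h
      nlinarith [h]
    rw [hE]
    linarith
  -- termwise bound
  have hbnd : ∀ j : ℕ,
      ((k + j).choose k : ℝ) * ‖b (k + j)‖ * ‖iteratedDeriv (j + r) g x‖ ≤ A * q ^ j := by
    intro j
    have hb' : ‖b (k + j)‖ ≤ C * Real.exp (-((m : ℝ) * youngConj ω (((k : ℝ) + j) / m))) := by
      have h := hb (k + j); push_cast at h; exact h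
    have hg' : ‖iteratedDeriv (j + r) g x‖ ≤
        Mg * Real.exp (2 * (ℓ : ℝ) * youngConj ω (((j : ℝ) + r) / (2 * ℓ))) := by
      have h := hMg (j + r) x
      push_cast at h
      have h2 := mul_le_mul_of_nonneg_right h
        (Real.exp_pos (2 * (ℓ : ℝ) * youngConj ω (((j : ℝ) + r) / (2 * ℓ)))).le
      rwa [mul_assoc, ← Real.exp_add, neg_add_cancel, Real.exp_zero, mul_one] at h2
    have hch : ((k + j).choose k : ℝ) ≤ 2 ^ (k + j) := choose_le_two_pow' (k + j) k
    have s1 : ((k + j).choose k : ℝ) * ‖b (k + j)‖ * ‖iteratedDeriv (j + r) g x‖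
        ≤ 2 ^ (k + j) * (C * Real.exp (-((m : ℝ) * youngConj ω (((k : ℝ) + j) / m)))) *
          (Mg * Real.exp (2 * (ℓ : ℝ) * youngConj ω (((j : ℝ) + r) / (2 * ℓ)))) := by
      apply mul_le_mul _ hg' (norm_nonneg _) (by positivity)
      exact mul_le_mul hch hb' (norm_nonneg _) (by positivity)
    have s2 : 2 ^ (k + j) * (C * Real.exp (-((m : ℝ) * youngConj ω (((k : ℝ) + j) / m)))) *
          (Mg * Real.exp (2 * (ℓ : ℝ) * youngConj ω (((j : ℝ) + r) / (2 * ℓ))))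
        = 2 ^ (k + j) * C * Mg *
          Real.exp (-((m : ℝ) * youngConj ω (((k : ℝ) + j) / m)) +
            2 * (ℓ : ℝ) * youngConj ω (((j : ℝ) + r) / (2 * ℓ))) := by
      rw [Real.exp_add]; ring
    have s3 : 2 ^ (k + j) * C * Mg *
          Real.exp (-((m : ℝ) * youngConj ω (((k : ℝ) + j) / m)) +
            2 * (ℓ : ℝ) * youngConj ω (((j : ℝ) + r) / (2 * ℓ)))
        ≤ 2 ^ (k + j) * C * Mg * Real.exp (E - j) :=
      mul_le_mul_of_nonneg_left (Real.exp_le_exp.2 (key j)) (by positivity)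
    have s4 : 2 ^ (k + j) * C * Mg * Real.exp (E - j) = A * q ^ j := by
      rw [hA, hq, div_pow, Real.exp_one_pow, Real.exp_sub, pow_add]
      field_simp
    rw [← s4]
    exact le_trans s1 (le_of_eq s2 |>.trans s3)
  have hq0 : (0:ℝ) ≤ q := by positivity
  have hq1 : q < 1 := by
    rw [hq, div_lt_one (Real.exp_pos 1)]
    linarith [Real.exp_one_gt_d9]
  have hgeo : Summable (fun j : ℕ => A * q ^ j) :=
    (summable_geometric_of_lt_one hq0 hq1).mul_left A
  have hsum : Summable (fun j : ℕ =>
      ((k + j).choose k : ℝ) * ‖b (k + j)‖ * ‖iteratedDeriv (j + r) g x‖) :=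
    Summable.of_nonneg_of_le (fun j => by positivity) hbnd hgeo
  refine ⟨hsum, ?_⟩
  calc ∑' j : ℕ, ((k + j).choose k : ℝ) * ‖b (k + j)‖ * ‖iteratedDeriv (j + r) g x‖
      ≤ ∑' j : ℕ, A * q ^ j := Summable.tsum_le_tsum hbnd hsum hgeo
    _ = A * ∑' j : ℕ, q ^ j := tsum_mul_left
    _ = 2 ^ k * (∑' j : ℕ, q ^ j) * C * Mg * Real.exp E := by rw [hA]; ring
end
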